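/- Suppose G is a Lehman graph of type (n,3,s) with k = 3s - n ∈ {1,-1}, where s > 2 if k = 1 and s > 1 if k = -1, and G contains a 3-rung ladder segment L. Then the 3-rung ladder reduction G↓L, obtained by deleting the six vertices of L and adding the edges (b_L, w_R) and (b_R, w_L), is a Lehman graph of type (n-3, 3, s-1). -/

import Mathlib

/-!
Write `J` for an all-ones matrix. Since `A Bᵀ = J + kI` is invertible and `A` is square with
constant line sums, `A` commutes with `J` and cancels on the left, so also `Bᵀ A = J + kI`. Hence
the entries of `B` in any row (column) summed over the three neighbours of a vertex give `1`,
or `1 + k` at that vertex itself. Around the ladder these relations force a row of `B` to have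
at most `(3 + k) / 2 < s` ones as soon as `bL = bR` or `bL ~ wR` (and dually for `wL`, `wR`),
which is excluded. Outside the ladder, the relation of `b₁` says that each row of `B` has
exactly one `1` among `w₀, w₁, w₂`, and those of `b₀, b₁, b₂` give `B v w₀ = B v wR` and
`B v w₂ = B v wL`; so the restriction of `B` is a partner for `G↓L`, whose new edges `bL wR`,
`bR wL` replace exactly the lost edges `bL w₀`, `bR w₂`.
-/

open Matrix BigOperators

def is01 {m n : Type*} (A : Matrix m n ℤ) : Prop := ∀ i j, A i j = 0 ∨ A i j = 1

theorem is01.nonneg {m n : Type*} {A : Matrix m n ℤ} (hA : is01 A) (i : m) (j : n) :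
    0 ≤ A i j := by
  rcases hA i j with h | h <;> simp [h]

theorem is01.le_one {m n : Type*} {A : Matrix m n ℤ} (hA : is01 A) (i : m) (j : n) :
    A i j ≤ 1 := by
  rcases hA i j with h | h <;> simp [h]

section ThreePoints

variable {α : Type*} [Fintype α] [DecidableEq α] {a b c : α}

theorem sum_subtype_ne_three {M : Type*} [AddCommGroup M] (f : α → M)
    (hab : a ≠ b) (hac : a ≠ c) (hbc : b ≠ c) :
    ∑ x : {x // x ≠ a ∧ x ≠ b ∧ x ≠ c}, f x = ∑ x, f x - (f a + f b + f c) := by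
  rw [← Finset.sum_subtype ({a, b, c}ᶜ : Finset α) (by simp), ← Finset.sum_compl_add_sum {a, b, c},
    Finset.sum_insert (by simp [hab, hac]), Finset.sum_pair hbc]
  abel

theorem card_subtype_ne_three (hab : a ≠ b) (hac : a ≠ c) (hbc : b ≠ c) :
    Fintype.card {x // x ≠ a ∧ x ≠ b ∧ x ≠ c} = Fintype.card α - 3 := by
  have h := sum_subtype_ne_three (fun _ => (1 : ℤ)) hab hac hbc
  simp only [Finset.sum_const, Finset.card_univ, nsmul_eq_mul, mul_one] at h
  omega

variable {f : α → ℤ}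

theorem eq_ite_of_sum_eq_three (hf : ∀ x, f x = 0 ∨ f x = 1) (hsum : ∑ x, f x = 3)
    (hab : a ≠ b) (hac : a ≠ c) (hbc : b ≠ c) (ha : f a = 1) (hb : f b = 1) (hc : f c = 1)
    (x : α) : f x = if x = a ∨ x = b ∨ x = c then 1 else 0 := by
  split_ifs with hx
  · rcases hx with rfl | rfl | rfl <;> assumption
  · have hzero : ∑ y : {y // y ≠ a ∧ y ≠ b ∧ y ≠ c}, f y = 0 := by
      rw [sum_subtype_ne_three f hab hac hbc, hsum, ha, hb, hc]; norm_num
    have hnonneg (y : {y // y ≠ a ∧ y ≠ b ∧ y ≠ c}) : 0 ≤ f y := by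
      rcases hf y with h | h <;> simp [h]
    simp only [not_or] at hx
    exact congrFun ((Fintype.sum_eq_zero_iff_of_nonneg hnonneg).1 hzero) ⟨x, hx⟩

theorem sum_mul_eq_of_sum_eq_three (hf : ∀ x, f x = 0 ∨ f x = 1) (hsum : ∑ x, f x = 3)
    (hab : a ≠ b) (hac : a ≠ c) (hbc : b ≠ c) (ha : f a = 1) (hb : f b = 1) (hc : f c = 1)
    (g : α → ℤ) : ∑ x, f x * g x = g a + g b + g c := by
  have hout : ∑ x : {x // x ≠ a ∧ x ≠ b ∧ x ≠ c}, f x * g x = 0 :=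
    Finset.sum_eq_zero fun x _ => by
      rw [eq_ite_of_sum_eq_three hf hsum hab hac hbc ha hb hc, if_neg (by simpa using x.2),
        zero_mul]
  have h := sum_subtype_ne_three (fun x => f x * g x) hab hac hbc
  rw [ha, hb, hc] at h
  linarith

end ThreePoints

/- Off `{y₀, y₁, y₂}` the three relations force `C r y = 0`, and at `y₀, y₁, y₂` they leave room
for at most `(3 + k) / 2` ones in the row `r`. -/
theorem two_mul_sum_le_of_ladder_equations {X Y : Type*} [Fintype Y] [DecidableEq Y]
    {C : Matrix X Y ℤ} (hC : is01 C) {k : ℤ} {p q r x : X} {y₀ y₁ y₂ : Y}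
    (h01 : y₀ ≠ y₁) (h02 : y₀ ≠ y₂) (h12 : y₁ ≠ y₂)
    (h₀ : ∀ y, C p y + C q y + C x y = 1 + if y₀ = y then k else 0)
    (h₁ : ∀ y, C p y + C q y + C r y = 1 + if y₁ = y then k else 0)
    (h₂ : ∀ y, C r y + C x y ≤ 1 + if y₂ = y then k else 0) :
    2 * ∑ y, C r y ≤ 3 + k := by
  have hout : ∑ y : {y // y ≠ y₀ ∧ y ≠ y₁ ∧ y ≠ y₂}, C r y = 0 :=
    Finset.sum_eq_zero fun y _ => by
      obtain ⟨hy₀, hy₁, hy₂⟩ := y.2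
      have e₀ := h₀ y; have e₁ := h₁ y; have e₂ := h₂ y
      simp only [hy₀.symm, hy₁.symm, hy₂.symm, if_false] at e₀ e₁ e₂
      have := hC.nonneg r y; have := hC.nonneg x y; have := hC.le_one x y
      omega
  have hsum := sum_subtype_ne_three (C r) h01 h02 h12
  have e₀ := h₀ y₀; have e₁ := h₁ y₀; have e₂ := h₂ y₀
  have f₀ := h₀ y₁; have f₁ := h₁ y₁; have f₂ := h₂ y₁
  have g₀ := h₀ y₂; have g₁ := h₁ y₂; have g₂ := h₂ y₂
  simp only [h01, h02, h12, h01.symm, h02.symm, h12.symm, if_true, if_false]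
    at e₀ e₁ e₂ f₀ f₁ f₂ g₀ g₁ g₂
  have := hC.nonneg r y₀; have := hC.nonneg x y₀; have := hC.le_one r y₀; have := hC.le_one x y₀
  have := hC.nonneg r y₁; have := hC.nonneg x y₁; have := hC.le_one r y₁; have := hC.le_one x y₁
  have := hC.nonneg r y₂; have := hC.nonneg x y₂; have := hC.le_one r y₂; have := hC.le_one x y₂
  omega

theorem allOnes_mul_allOnes {m n K : Type*} [Fintype n] [Semiring K] :
    (of fun _ _ => 1 : Matrix m n K) * (of fun _ _ => 1 : Matrix n m K) =
      (Fintype.card n : K) • of fun _ _ => 1 := by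
  ext; simp [mul_apply]

section Commutation

variable {m n : Type*} [Fintype m] [Fintype n] [DecidableEq m]

theorem allOnes_add_smul_one_mul_inv {K : Type*} [Field K] {k : K} (hk : k ≠ 0)
    (hnk : (Fintype.card m : K) + k ≠ 0) :
    (of (fun _ _ => 1) + k • 1 : Matrix m m K) *
      (k⁻¹ • (1 - ((Fintype.card m : K) + k)⁻¹ • of fun _ _ => 1)) = 1 := by
  rw [mul_smul_comm, mul_sub, mul_one, mul_smul_comm, add_mul, allOnes_mul_allOnes, smul_mul,
    one_mul, ← add_smul, smul_smul, inv_mul_cancel₀ hnk, one_smul, add_sub_cancel_left,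
    smul_smul, inv_mul_cancel₀ hk, one_smul]

variable [DecidableEq n]

theorem mul_left_cancel_of_mul_eq_one {R l : Type*} [CommRing R] [Fintype l]
    {A : Matrix m n R} {E : Matrix n m R} (hcard : Fintype.card m = Fintype.card n)
    (hAE : A * E = 1) {X Y : Matrix n l R} (h : A * X = A * Y) : X = Y := by
  have hEA : E * A = 1 := (mul_eq_one_comm_of_equiv (Fintype.equivOfCardEq hcard)).1 hAE
  rw [← Matrix.one_mul X, ← Matrix.one_mul Y, ← hEA, Matrix.mul_assoc, Matrix.mul_assoc, h]

/- `A (Bᵀ A) = (J + kI) A = A (J + kI)`, and `A` cancels on the left since over `ℚ` it has the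
right inverse `Bᵀ (J + kI)⁻¹`. -/
theorem transpose_mul_eq_of_mul_transpose_eq {A B : Matrix m n ℤ} {r k : ℤ}
    (hcard : Fintype.card m = Fintype.card n) (hk : k ≠ 0) (hnk : (Fintype.card m : ℤ) + k ≠ 0)
    (hrow : ∀ i, ∑ j, A i j = r) (hcol : ∀ j, ∑ i, A i j = r)
    (h : A * Bᵀ = of (fun _ _ => 1) + k • 1) : Bᵀ * A = of (fun _ _ => 1) + k • 1 := by
  set q := Int.castRingHom ℚ
  have hq : A.map q * Bᵀ.map q = (of (fun _ _ => 1) + (k : ℚ) • 1 : Matrix m m ℚ) := by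
    rw [← Matrix.map_mul, h]
    ext i j
    simp only [map_apply, Matrix.add_apply, of_apply, Matrix.smul_apply, one_apply]
    split_ifs <;> simp [q]
  have hinv : A.map q * (Bᵀ.map q * ((k : ℚ)⁻¹ •
      (1 - ((Fintype.card m : ℚ) + k)⁻¹ • (of fun _ _ => 1 : Matrix m m ℚ)))) = 1 := by
    rw [← Matrix.mul_assoc, hq]
    exact allOnes_add_smul_one_mul_inv (by exact_mod_cast hk) (by exact_mod_cast hnk)
  have hJA : (of fun _ _ => 1 : Matrix m m ℤ) * A = of fun _ _ => r := by
    ext; simp [mul_apply, hcol]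
  have hAJ : A * (of fun _ _ => 1 : Matrix n n ℤ) = of fun _ _ => r := by
    ext; simp [mul_apply, hrow]
  refine Matrix.map_injective (f := q) (RingHom.injective_int q)
    (mul_left_cancel_of_mul_eq_one hcard hinv ?_)
  simp only [← Matrix.map_mul]
  congr 1
  rw [← Matrix.mul_assoc, h, Matrix.add_mul, Matrix.mul_add, hJA, hAJ, Matrix.smul_mul,
    Matrix.mul_smul, Matrix.one_mul, Matrix.mul_one]

end Commutation

section Ladder

variable {V W : Type*}

structure IsLadderSegment (A : Matrix V W ℤ) (b₀ b₁ b₂ : V) (w₀ w₁ w₂ : W)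
    (bL : V) (wL : W) (bR : V) (wR : W) : Prop where
  b₀_ne_b₁ : b₀ ≠ b₁
  b₀_ne_b₂ : b₀ ≠ b₂
  b₁_ne_b₂ : b₁ ≠ b₂
  w₀_ne_w₁ : w₀ ≠ w₁
  w₀_ne_w₂ : w₀ ≠ w₂
  w₁_ne_w₂ : w₁ ≠ w₂
  adj₀₀ : A b₀ w₀ = 1
  adj₁₁ : A b₁ w₁ = 1
  adj₂₂ : A b₂ w₂ = 1
  adj₀₁ : A b₀ w₁ = 1
  adj₁₀ : A b₁ w₀ = 1
  adj₁₂ : A b₁ w₂ = 1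
  adj₂₁ : A b₂ w₁ = 1
  bL_ne : bL ≠ b₀ ∧ bL ≠ b₁ ∧ bL ≠ b₂
  wL_ne : wL ≠ w₀ ∧ wL ≠ w₁ ∧ wL ≠ w₂
  bR_ne : bR ≠ b₀ ∧ bR ≠ b₁ ∧ bR ≠ b₂
  wR_ne : wR ≠ w₀ ∧ wR ≠ w₁ ∧ wR ≠ w₂
  adj_bL : A bL w₀ = 1
  adj_wL : A b₀ wL = 1
  adj_bR : A bR w₂ = 1
  adj_wR : A b₂ wR = 1

variable {A : Matrix V W ℤ} {b₀ b₁ b₂ bL bR : V} {w₀ w₁ w₂ wL wR : W}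

theorem IsLadderSegment.transpose (hL : IsLadderSegment A b₀ b₁ b₂ w₀ w₁ w₂ bL wL bR wR) :
    IsLadderSegment Aᵀ w₀ w₁ w₂ b₀ b₁ b₂ wL bL wR bR where
  b₀_ne_b₁ := hL.w₀_ne_w₁
  b₀_ne_b₂ := hL.w₀_ne_w₂
  b₁_ne_b₂ := hL.w₁_ne_w₂
  w₀_ne_w₁ := hL.b₀_ne_b₁
  w₀_ne_w₂ := hL.b₀_ne_b₂
  w₁_ne_w₂ := hL.b₁_ne_b₂
  adj₀₀ := hL.adj₀₀
  adj₁₁ := hL.adj₁₁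
  adj₂₂ := hL.adj₂₂
  adj₀₁ := hL.adj₁₀
  adj₁₀ := hL.adj₀₁
  adj₁₂ := hL.adj₂₁
  adj₂₁ := hL.adj₁₂
  bL_ne := hL.wL_ne
  wL_ne := hL.bL_ne
  bR_ne := hL.wR_ne
  wR_ne := hL.bR_ne
  adj_bL := hL.adj_wL
  adj_wL := hL.adj_bL
  adj_bR := hL.adj_wR
  adj_wR := hL.adj_bR

variable [DecidableEq V] [DecidableEq W]

def ladderReduction (A : Matrix V W ℤ) (b₀ b₁ b₂ : V) (w₀ w₁ w₂ : W) (bL : V) (wL : W) (bR : V)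
    (wR : W) : Matrix {v : V // v ≠ b₀ ∧ v ≠ b₁ ∧ v ≠ b₂} {w : W // w ≠ w₀ ∧ w ≠ w₁ ∧ w ≠ w₂} ℤ :=
  of fun b w => if (b.1 = bL ∧ w.1 = wR) ∨ (b.1 = bR ∧ w.1 = wL) then 1 else A b.1 w.1

theorem transpose_ladderReduction :
    (ladderReduction A b₀ b₁ b₂ w₀ w₁ w₂ bL wL bR wR)ᵀ =
      ladderReduction Aᵀ w₀ w₁ w₂ b₀ b₁ b₂ wL bL wR bR := by
  ext w b
  simp only [ladderReduction, transpose_apply, of_apply]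
  congr 1
  exact propext (by tauto)

theorem is01_ladderReduction (hA : is01 A) :
    is01 (ladderReduction A b₀ b₁ b₂ w₀ w₁ w₂ bL wL bR wR) := fun b w => by
  simp only [ladderReduction, of_apply]
  split_ifs
  · exact Or.inr rfl
  · exact hA _ _

theorem ladderReduction_apply (hLR : bL ≠ bR) (hLR₀ : A bL wR = 0) (hRL₀ : A bR wL = 0)
    (u : {v : V // v ≠ b₀ ∧ v ≠ b₁ ∧ v ≠ b₂}) (w : {w : W // w ≠ w₀ ∧ w ≠ w₁ ∧ w ≠ w₂}) :
    ladderReduction A b₀ b₁ b₂ w₀ w₁ w₂ bL wL bR wR u w =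
      A u w + (if u.1 = bL ∧ w.1 = wR then 1 else 0) + (if u.1 = bR ∧ w.1 = wL then 1 else 0) := by
  simp only [ladderReduction, of_apply]
  split_ifs <;> simp_all

end Ladder

section Lehman

variable {V W : Type*} [Fintype V] [Fintype W] [DecidableEq V] [DecidableEq W]

/- `transpose_mul` follows from the other fields (`transpose_mul_eq_of_mul_transpose_eq`); it is
a field so that the notion is invariant under transposition. -/
structure IsLehmanPair (A B : Matrix V W ℤ) (s k : ℤ) : Prop where
  A_zero_one : is01 A
  B_zero_one : is01 B
  A_row_sum : ∀ v, ∑ w, A v w = 3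
  A_col_sum : ∀ w, ∑ v, A v w = 3
  B_row_sum : ∀ v, ∑ w, B v w = s
  B_col_sum : ∀ w, ∑ v, B v w = s
  mul_transpose : A * Bᵀ = of (fun _ _ => 1) + k • 1
  transpose_mul : Bᵀ * A = of (fun _ _ => 1) + k • 1

namespace IsLehmanPair

variable {A B : Matrix V W ℤ} {s k : ℤ}

theorem transpose (hP : IsLehmanPair A B s k) : IsLehmanPair Aᵀ Bᵀ s k where
  A_zero_one i j := hP.A_zero_one j i
  B_zero_one i j := hP.B_zero_one j i
  A_row_sum := hP.A_col_sum
  A_col_sum := hP.A_row_sum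
  B_row_sum := hP.B_col_sum
  B_col_sum := hP.B_row_sum
  mul_transpose := by
    rw [transpose_transpose, ← transpose_transpose (Aᵀ * B), Matrix.transpose_mul,
      transpose_transpose, hP.transpose_mul, transpose_add, transpose_smul, transpose_one]
    rfl
  transpose_mul := by
    rw [transpose_transpose, ← transpose_transpose (B * Aᵀ), Matrix.transpose_mul,
      transpose_transpose, hP.mul_transpose, transpose_add, transpose_smul, transpose_one]
    rfl

theorem sum_mul_eq (hP : IsLehmanPair A B s k) (u v : V) :
    ∑ w, A u w * B v w = 1 + if u = v then k else 0 := by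
  have h := congrFun (congrFun hP.mul_transpose u) v
  simp only [mul_apply, transpose_apply, Matrix.add_apply, of_apply, Matrix.smul_apply,
    one_apply, smul_eq_mul, mul_ite, mul_one, mul_zero] at h
  exact h

theorem adj_eq_ite (hP : IsLehmanPair A B s k) {u : V} {a b c : W} (hab : a ≠ b) (hac : a ≠ c)
    (hbc : b ≠ c) (ha : A u a = 1) (hb : A u b = 1) (hc : A u c = 1) (w : W) :
    A u w = if w = a ∨ w = b ∨ w = c then 1 else 0 :=
  eq_ite_of_sum_eq_three (hP.A_zero_one u) (hP.A_row_sum u) hab hac hbc ha hb hc w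

theorem B_add_add_of_adj (hP : IsLehmanPair A B s k) {u : V} {a b c : W} (hab : a ≠ b)
    (hac : a ≠ c) (hbc : b ≠ c) (ha : A u a = 1) (hb : A u b = 1) (hc : A u c = 1) (v : V) :
    B v a + B v b + B v c = 1 + if u = v then k else 0 := by
  rw [← hP.sum_mul_eq u v,
    sum_mul_eq_of_sum_eq_three (hP.A_zero_one u) (hP.A_row_sum u) hab hac hbc ha hb hc]

theorem B_add_le_of_adj (hP : IsLehmanPair A B s k) {u : V} {a b : W} (hab : a ≠ b)
    (ha : A u a = 1) (hb : A u b = 1) (v : V) : B v a + B v b ≤ 1 + if u = v then k else 0 := by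
  rw [← hP.sum_mul_eq u v]
  calc B v a + B v b = ∑ w ∈ {a, b}, A u w * B v w := by
        rw [Finset.sum_pair hab, ha, hb, one_mul, one_mul]
    _ ≤ ∑ w, A u w * B v w :=
        Finset.sum_le_sum_of_subset_of_nonneg (Finset.subset_univ _) fun w _ _ =>
          mul_nonneg (hP.A_zero_one.nonneg u w) (hP.B_zero_one.nonneg v w)

end IsLehmanPair

namespace IsLadderSegment

variable {A B : Matrix V W ℤ} {s k : ℤ} {b₀ b₁ b₂ bL bR : V} {w₀ w₁ w₂ wL wR : W}
variable (hP : IsLehmanPair A B s k) (hL : IsLadderSegment A b₀ b₁ b₂ w₀ w₁ w₂ bL wL bR wR)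
include hP hL

theorem adj_w₀_eq {u : V} (hu : u ≠ b₀ ∧ u ≠ b₁ ∧ u ≠ b₂) :
    A u w₀ = if u = bL then 1 else 0 := by
  have h := hP.transpose.adj_eq_ite hL.b₀_ne_b₁ hL.bL_ne.1.symm hL.bL_ne.2.1.symm hL.adj₀₀
    hL.adj₁₀ hL.adj_bL u
  simpa [hu.1, hu.2.1] using h

theorem adj_w₁_eq_zero {u : V} (hu : u ≠ b₀ ∧ u ≠ b₁ ∧ u ≠ b₂) : A u w₁ = 0 := by
  have h := hP.transpose.adj_eq_ite hL.b₀_ne_b₁ hL.b₀_ne_b₂ hL.b₁_ne_b₂ hL.adj₀₁ hL.adj₁₁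
    hL.adj₂₁ u
  simpa [hu.1, hu.2.1, hu.2.2] using h

theorem adj_w₂_eq {u : V} (hu : u ≠ b₀ ∧ u ≠ b₁ ∧ u ≠ b₂) :
    A u w₂ = if u = bR then 1 else 0 := by
  have h := hP.transpose.adj_eq_ite hL.b₁_ne_b₂ hL.bR_ne.2.1.symm hL.bR_ne.2.2.symm hL.adj₁₂
    hL.adj₂₂ hL.adj_bR u
  simpa [hu.2.1, hu.2.2] using h

theorem B_w₀_add_B_w₁_add_B_w₂ {v : V} (hv : v ≠ b₁) : B v w₀ + B v w₁ + B v w₂ = 1 := by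
  simpa [Ne.symm hv] using hP.B_add_add_of_adj hL.w₀_ne_w₁ hL.w₀_ne_w₂ hL.w₁_ne_w₂ hL.adj₁₀
    hL.adj₁₁ hL.adj₁₂ v

theorem B_w₀_eq_B_wR {v : V} (hv₁ : v ≠ b₁) (hv₂ : v ≠ b₂) : B v w₀ = B v wR := by
  have h := hP.B_add_add_of_adj hL.w₁_ne_w₂ hL.wR_ne.2.1.symm hL.wR_ne.2.2.symm hL.adj₂₁
    hL.adj₂₂ hL.adj_wR v
  rw [if_neg (Ne.symm hv₂)] at h
  linarith [hL.B_w₀_add_B_w₁_add_B_w₂ hP hv₁]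

theorem B_w₂_eq_B_wL {v : V} (hv₀ : v ≠ b₀) (hv₁ : v ≠ b₁) : B v w₂ = B v wL := by
  have h := hP.B_add_add_of_adj hL.w₀_ne_w₁ hL.wL_ne.1.symm hL.wL_ne.2.1.symm hL.adj₀₀
    hL.adj₀₁ hL.adj_wL v
  rw [if_neg (Ne.symm hv₀)] at h
  linarith [hL.B_w₀_add_B_w₁_add_B_w₂ hP hv₁]

theorem bL_ne_bR (hs : 3 + k < 2 * s) : bL ≠ bR := by
  rintro rfl
  have := two_mul_sum_le_of_ladder_equations hP.B_zero_one hL.w₀_ne_w₁ hL.w₀_ne_w₂ hL.w₁_ne_w₂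
    (hP.transpose.B_add_add_of_adj (u := w₀) hL.b₀_ne_b₁ hL.bL_ne.1.symm hL.bL_ne.2.1.symm
      hL.adj₀₀ hL.adj₁₀ hL.adj_bL)
    (hP.transpose.B_add_add_of_adj (u := w₁) hL.b₀_ne_b₁ hL.b₀_ne_b₂ hL.b₁_ne_b₂
      hL.adj₀₁ hL.adj₁₁ hL.adj₂₁)
    (hP.transpose.B_add_le_of_adj (u := w₂) hL.bR_ne.2.2.symm hL.adj₂₂ hL.adj_bR)
  rw [hP.B_row_sum] at this
  omega

theorem adj_bL_wR_eq_zero (hs : 3 + k < 2 * s) : A bL wR = 0 := by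
  by_contra hne
  have hadj : A bL wR = 1 := (hP.A_zero_one bL wR).resolve_left hne
  have := two_mul_sum_le_of_ladder_equations hP.B_zero_one hL.w₀_ne_w₁ hL.wR_ne.1.symm
    hL.wR_ne.2.1.symm
    (hP.transpose.B_add_add_of_adj (u := w₀) hL.b₀_ne_b₁ hL.bL_ne.1.symm hL.bL_ne.2.1.symm
      hL.adj₀₀ hL.adj₁₀ hL.adj_bL)
    (hP.transpose.B_add_add_of_adj (u := w₁) hL.b₀_ne_b₁ hL.b₀_ne_b₂ hL.b₁_ne_b₂
      hL.adj₀₁ hL.adj₁₁ hL.adj₂₁)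
    (hP.transpose.B_add_le_of_adj (u := wR) hL.bL_ne.2.2.symm hL.adj_wR hadj)
  rw [hP.B_row_sum] at this
  omega

theorem adj_bR_wL_eq_zero (hs : 3 + k < 2 * s) : A bR wL = 0 :=
  (hL.transpose.adj_bL_wR_eq_zero hP.transpose hs :)

theorem ladderReduction_row_sum (hs : 3 + k < 2 * s) (u : {v : V // v ≠ b₀ ∧ v ≠ b₁ ∧ v ≠ b₂}) :
    ∑ w, ladderReduction A b₀ b₁ b₂ w₀ w₁ w₂ bL wL bR wR u w = 3 := by
  simp only [ladderReduction_apply (hL.bL_ne_bR hP hs) (hL.adj_bL_wR_eq_zero hP hs)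
    (hL.adj_bR_wL_eq_zero hP hs)]
  rw [sum_subtype_ne_three (fun w => A u w + (if u.1 = bL ∧ w = wR then 1 else 0) +
    (if u.1 = bR ∧ w = wL then 1 else 0)) hL.w₀_ne_w₁ hL.w₀_ne_w₂ hL.w₁_ne_w₂]
  simp [Finset.sum_add_distrib, ite_and, hP.A_row_sum, hL.adj_w₀_eq hP u.2,
    hL.adj_w₁_eq_zero hP u.2, hL.adj_w₂_eq hP u.2, hL.wR_ne.1.symm, hL.wR_ne.2.1.symm,
    hL.wR_ne.2.2.symm, hL.wL_ne.1.symm, hL.wL_ne.2.1.symm, hL.wL_ne.2.2.symm]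

theorem ladderReduction_col_sum (hs : 3 + k < 2 * s) (w : {w : W // w ≠ w₀ ∧ w ≠ w₁ ∧ w ≠ w₂}) :
    ∑ u, ladderReduction A b₀ b₁ b₂ w₀ w₁ w₂ bL wL bR wR u w = 3 := by
  have h := hL.transpose.ladderReduction_row_sum hP.transpose hs w
  rw [← transpose_ladderReduction] at h
  exact h

theorem B_row_sum_reduced (u : {v : V // v ≠ b₀ ∧ v ≠ b₁ ∧ v ≠ b₂}) :
    ∑ w : {w : W // w ≠ w₀ ∧ w ≠ w₁ ∧ w ≠ w₂}, B u w = s - 1 := by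
  rw [sum_subtype_ne_three (B u) hL.w₀_ne_w₁ hL.w₀_ne_w₂ hL.w₁_ne_w₂, hP.B_row_sum,
    hL.B_w₀_add_B_w₁_add_B_w₂ hP u.2.2.1]

theorem B_col_sum_reduced (w : {w : W // w ≠ w₀ ∧ w ≠ w₁ ∧ w ≠ w₂}) :
    ∑ u : {v : V // v ≠ b₀ ∧ v ≠ b₁ ∧ v ≠ b₂}, B u w = s - 1 :=
  hL.transpose.B_row_sum_reduced hP.transpose w

theorem ladderReduction_mul_transpose (hs : 3 + k < 2 * s) :
    ladderReduction A b₀ b₁ b₂ w₀ w₁ w₂ bL wL bR wR *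
      (B.submatrix (Subtype.val : {v : V // v ≠ b₀ ∧ v ≠ b₁ ∧ v ≠ b₂} → V)
        (Subtype.val : {w : W // w ≠ w₀ ∧ w ≠ w₁ ∧ w ≠ w₂} → W))ᵀ =
      of (fun _ _ => 1) + k • 1 := by
  ext u v
  simp only [mul_apply, transpose_apply, submatrix_apply, Matrix.add_apply, of_apply,
    Matrix.smul_apply, one_apply, smul_eq_mul, mul_ite, mul_one, mul_zero,
    ladderReduction_apply (hL.bL_ne_bR hP hs) (hL.adj_bL_wR_eq_zero hP hs)
      (hL.adj_bR_wL_eq_zero hP hs)]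
  rw [sum_subtype_ne_three (fun w => (A u w + (if u.1 = bL ∧ w = wR then 1 else 0) +
    (if u.1 = bR ∧ w = wL then 1 else 0)) * B v w) hL.w₀_ne_w₁ hL.w₀_ne_w₂ hL.w₁_ne_w₂]
  simp [add_mul, Finset.sum_add_distrib, ite_and, hP.sum_mul_eq, hL.adj_w₀_eq hP u.2,
    hL.adj_w₁_eq_zero hP u.2, hL.adj_w₂_eq hP u.2, hL.wR_ne.1.symm, hL.wR_ne.2.1.symm,
    hL.wR_ne.2.2.symm, hL.wL_ne.1.symm, hL.wL_ne.2.1.symm, hL.wL_ne.2.2.symm,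
    hL.B_w₀_eq_B_wR hP v.2.2.1 v.2.2.2, hL.B_w₂_eq_B_wL hP v.2.1 v.2.2.1, Subtype.ext_iff]

end IsLadderSegment

end Lehman

theorem stmt13_general {V W : Type*} [Fintype V] [Fintype W] [DecidableEq V] [DecidableEq W]
    (n s : ℕ) (hcardV : Fintype.card V = n) (hcardW : Fintype.card W = n)
    (A : Matrix V W ℤ) (hA : is01 A)
    (hArow : ∀ b, ∑ w, A b w = 3) (hAcol : ∀ w, ∑ b, A b w = 3)
    (B : Matrix V W ℤ) (hB : is01 B)
    (hBrow : ∀ b, ∑ w, B b w = s) (hBcol : ∀ w, ∑ b, B b w = s)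
    (k : ℤ) (hk : k = 3 * s - n) (hk1 : k = 1 ∨ k = -1)
    (hs1 : k = 1 → 2 < s) (hs2 : k = -1 → 1 < s)
    (hAB : A * Bᵀ = Matrix.of (fun _ _ => (1 : ℤ)) + k • 1)
    -- the 3-rung ladder segment L
    (b₀ b₁ b₂ : V) (w₀ w₁ w₂ : W)
    (hb01 : b₀ ≠ b₁) (hb02 : b₀ ≠ b₂) (hb12 : b₁ ≠ b₂)
    (hw01 : w₀ ≠ w₁) (hw02 : w₀ ≠ w₂) (hw12 : w₁ ≠ w₂)
    (h00 : A b₀ w₀ = 1) (h11 : A b₁ w₁ = 1) (h22 : A b₂ w₂ = 1)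
    (h01 : A b₀ w₁ = 1) (h10 : A b₁ w₀ = 1) (h12 : A b₁ w₂ = 1) (h21 : A b₂ w₁ = 1)
    -- the attachment vertices
    (bL : V) (hbL : bL ∉ ({b₀, b₁, b₂} : Set V)) (hbLe : A bL w₀ = 1)
    (wL : W) (hwL : wL ∉ ({w₀, w₁, w₂} : Set W)) (hwLe : A b₀ wL = 1)
    (bR : V) (hbR : bR ∉ ({b₀, b₁, b₂} : Set V)) (hbRe : A bR w₂ = 1)
    (wR : W) (hwR : wR ∉ ({w₀, w₁, w₂} : Set W)) (hwRe : A b₂ wR = 1)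
    -- the bipartite adjacency matrix of G↓L: delete the six ladder vertices and add
    -- the edges (b_L, w_R) and (b_R, w_L)
    (A' : Matrix {v : V // v ≠ b₀ ∧ v ≠ b₁ ∧ v ≠ b₂} {w : W // w ≠ w₀ ∧ w ≠ w₁ ∧ w ≠ w₂} ℤ)
    (hA' : ∀ b w, A' b w =
      if (b.1 = bL ∧ w.1 = wR) ∨ (b.1 = bR ∧ w.1 = wL) then 1 else A b.1 w.1) :
    is01 A' ∧
    (∀ b, ∑ w, A' b w = 3) ∧ (∀ w, ∑ b, A' b w = 3) ∧
    Fintype.card {v : V // v ≠ b₀ ∧ v ≠ b₁ ∧ v ≠ b₂} = n - 3 ∧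
    ∃ B' : Matrix {v : V // v ≠ b₀ ∧ v ≠ b₁ ∧ v ≠ b₂}
        {w : W // w ≠ w₀ ∧ w ≠ w₁ ∧ w ≠ w₂} ℤ,
      is01 B' ∧
      (∀ b, ∑ w, B' b w = (s : ℤ) - 1) ∧ (∀ w, ∑ b, B' b w = (s : ℤ) - 1) ∧
      A' * B'ᵀ = Matrix.of (fun _ _ => (1 : ℤ)) + k • 1 := by
  have hk0 : k ≠ 0 := by omega
  have hs : 3 + k < 2 * (s : ℤ) := by
    rcases hk1 with h | h
    · have := hs1 h; omega
    · have := hs2 h; omega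
  have hP : IsLehmanPair A B s k :=
    { A_zero_one := hA, B_zero_one := hB, A_row_sum := hArow, A_col_sum := hAcol,
      B_row_sum := hBrow, B_col_sum := hBcol, mul_transpose := hAB,
      transpose_mul := transpose_mul_eq_of_mul_transpose_eq (hcardV.trans hcardW.symm) hk0
        (by omega) hArow hAcol hAB }
  simp only [Set.mem_insert_iff, Set.mem_singleton_iff, not_or] at hbL hwL hbR hwR
  have hL : IsLadderSegment A b₀ b₁ b₂ w₀ w₁ w₂ bL wL bR wR :=
    ⟨hb01, hb02, hb12, hw01, hw02, hw12, h00, h11, h22, h01, h10, h12, h21,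
      hbL, hwL, hbR, hwR, hbLe, hwLe, hbRe, hwRe⟩
  obtain rfl : A' = ladderReduction A b₀ b₁ b₂ w₀ w₁ w₂ bL wL bR wR := Matrix.ext hA'
  exact ⟨is01_ladderReduction hA, hL.ladderReduction_row_sum hP hs,
    hL.ladderReduction_col_sum hP hs, by rw [card_subtype_ne_three hb01 hb02 hb12, hcardV],
    B.submatrix Subtype.val Subtype.val, fun _ _ => hB _ _, hL.B_row_sum_reduced hP,
    hL.B_col_sum_reduced hP, hL.ladderReduction_mul_transpose hP hs⟩

/-- The 3-rung ladder reduction G↓L of a Lehman graph of type (n,3,s) with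
k = 3s - n ∈ {1,-1} (s > 2 if k = 1, s > 1 if k = -1) is a Lehman graph of
type (n-3, 3, s-1). -/
theorem stmt13 {V W : Type*} [Fintype V] [Fintype W] [DecidableEq V] [DecidableEq W]
    (n s : ℕ) (hcardV : Fintype.card V = n) (hcardW : Fintype.card W = n)
    (A : Matrix V W ℤ) (hA : is01 A)
    (hArow : ∀ b, ∑ w, A b w = 3) (hAcol : ∀ w, ∑ b, A b w = 3)
    (B : Matrix V W ℤ) (hB : is01 B)
    (hBrow : ∀ b, ∑ w, B b w = s) (hBcol : ∀ w, ∑ b, B b w = s)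
    (k : ℤ) (hk : k = 3 * s - n) (hk1 : k = 1 ∨ k = -1)
    (hs1 : k = 1 → 2 < s) (hs2 : k = -1 → 1 < s)
    (hAB : A * Bᵀ = Matrix.of (fun _ _ => (1 : ℤ)) + k • 1)
    -- the 3-rung ladder segment L
    (b₀ b₁ b₂ : V) (w₀ w₁ w₂ : W)
    (hb01 : b₀ ≠ b₁) (hb02 : b₀ ≠ b₂) (hb12 : b₁ ≠ b₂)
    (hw01 : w₀ ≠ w₁) (hw02 : w₀ ≠ w₂) (hw12 : w₁ ≠ w₂)
    (h00 : A b₀ w₀ = 1) (h11 : A b₁ w₁ = 1) (h22 : A b₂ w₂ = 1)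
    (h01 : A b₀ w₁ = 1) (h10 : A b₁ w₀ = 1) (h12 : A b₁ w₂ = 1) (h21 : A b₂ w₁ = 1)
    (h02 : A b₀ w₂ = 0) (h20 : A b₂ w₀ = 0)
    -- the attachment vertices
    (bL : V) (hbL : bL ∉ ({b₀, b₁, b₂} : Set V)) (hbLe : A bL w₀ = 1)
    (wL : W) (hwL : wL ∉ ({w₀, w₁, w₂} : Set W)) (hwLe : A b₀ wL = 1)
    (bR : V) (hbR : bR ∉ ({b₀, b₁, b₂} : Set V)) (hbRe : A bR w₂ = 1)
    (wR : W) (hwR : wR ∉ ({w₀, w₁, w₂} : Set W)) (hwRe : A b₂ wR = 1)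
    -- the bipartite adjacency matrix of G↓L: delete the six ladder vertices and add
    -- the edges (b_L, w_R) and (b_R, w_L)
    (A' : Matrix {v : V // v ≠ b₀ ∧ v ≠ b₁ ∧ v ≠ b₂} {w : W // w ≠ w₀ ∧ w ≠ w₁ ∧ w ≠ w₂} ℤ)
    (hA' : ∀ b w, A' b w =
      if (b.1 = bL ∧ w.1 = wR) ∨ (b.1 = bR ∧ w.1 = wL) then 1 else A b.1 w.1) :
    is01 A' ∧
    (∀ b, ∑ w, A' b w = 3) ∧ (∀ w, ∑ b, A' b w = 3) ∧
    Fintype.card {v : V // v ≠ b₀ ∧ v ≠ b₁ ∧ v ≠ b₂} = n - 3 ∧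
    ∃ B' : Matrix {v : V // v ≠ b₀ ∧ v ≠ b₁ ∧ v ≠ b₂}
        {w : W // w ≠ w₀ ∧ w ≠ w₁ ∧ w ≠ w₂} ℤ,
      is01 B' ∧
      (∀ b, ∑ w, B' b w = (s : ℤ) - 1) ∧ (∀ w, ∑ b, B' b w = (s : ℤ) - 1) ∧
      A' * B'ᵀ = Matrix.of (fun _ _ => (1 : ℤ)) + k • 1 :=
  stmt13_general n s hcardV hcardW A hA hArow hAcol B hB hBrow hBcol k hk hk1 hs1 hs2 hAB b₀ b₁ b₂
    w₀ w₁ w₂ hb01 hb02 hb12 hw01 hw02 hw12 h00 h11 h22 h01 h10 h12 h21 bL hbL hbLe wL hwL hwLe bR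
    hbR hbRe wR hwR hwRe A' hA'
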